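/- P·C = X_n·P, where P is the lower triangular matrix with (P)_{ij} = q_{i-j}/(j-1)! for i ≥ j (with q_0 = 1), C is the companion matrix of Q(x) = x^n + n q_1 x^{n-1} + n(n-1) q_2 x^{n-2} + ... + n! q_n, and X_n is the Newton-identity matrix. In particular, since P is invertible, X_n is similar to C and hence has characteristic polynomial Q(x). -/

import Mathlib

open Polynomial Matrix
open scoped Nat

/-!
Up to the factorials, `P` is the lower triangular Toeplitz matrix of `1, q₁, q₂, …`, and the
Newton identities say that the Toeplitz matrix of `x₁, x₂, …` times it is the Toeplitz matrix of
`-q₁, -2q₂, -3q₃, …`. Comparing entries, `P C = X_n P` then comes down to `j / j! = 1 / (j-1)!`,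
and in the last row to `(n! / j!) / (n-1)! = n / j!`. As `P` is triangular with diagonal entries
`1 / j!`, it is invertible, so `X_n` has the characteristic polynomial of the companion matrix `C`,
which is `Q` (expand along the first column and induct on `n`).
-/

section CommRing

variable {R : Type*} [CommRing R]

theorem Matrix.charmatrix_submatrix {ι κ : Type*} [Fintype ι] [DecidableEq ι] [Fintype κ]
    [DecidableEq κ] (M : Matrix ι ι R) {f : κ → ι} (hf : Function.Injective f) :
    (charmatrix M).submatrix f f = charmatrix (M.submatrix f f) := by
  ext i j
  by_cases h : i = j
  · simp [h]
  · simp [h, hf.ne h]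

theorem charpoly_eq_of_mul_eq_mul {ι : Type*} [Fintype ι] [DecidableEq ι]
    {A B P : Matrix ι ι R} (hP : IsUnit P) (h : P * A = B * P) : A.charpoly = B.charpoly := by
  obtain ⟨U, rfl⟩ := hP
  rw [← charpoly_units_conj U A, h, mul_assoc, ← coe_units_inv, Units.mul_inv, mul_one]

/-- The companion matrix of `X ^ n + ∑ j < n, c j * X ^ j`. -/
def companionMatrix (n : ℕ) (c : ℕ → R) : Matrix (Fin n) (Fin n) R :=
  of fun i j => if (j : ℕ) = i + 1 then 1 else if (i : ℕ) = n - 1 then -c j else 0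

theorem companionMatrix_submatrix_succ (n : ℕ) (c : ℕ → R) :
    (companionMatrix (n + 1) c).submatrix Fin.succ Fin.succ
      = companionMatrix n fun k => c (k + 1) := by
  ext i j
  simp only [companionMatrix, submatrix_apply, of_apply, Fin.val_succ]
  grind

theorem det_charmatrix_companionMatrix_submatrix_last (n : ℕ) (c : ℕ → R) :
    ((companionMatrix (n + 1) c).charmatrix.submatrix Fin.castSucc Fin.succ).det
      = (-1) ^ n := by
  have hentry : ∀ i j : Fin n, (companionMatrix (n + 1) c).charmatrix i.castSucc j.succ
      = if (i : ℕ) = j + 1 then X else if i = j then -1 else 0 := by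
    intro i j
    simp only [charmatrix_apply, companionMatrix, of_apply, diagonal_apply, Fin.ext_iff,
      Fin.val_castSucc, Fin.val_succ]
    split_ifs <;> first | omega | simp
  rw [det_of_isLowerTriangular]
  · simp [hentry]
  · intro i j hij
    have : (i : ℕ) < j := hij
    simp only [submatrix_apply, hentry]
    split_ifs <;> first | omega | rfl

theorem charmatrix_companionMatrix_zero_zero (n : ℕ) (c : ℕ → R) :
    (companionMatrix (n + 1) c).charmatrix 0 0 = X + if n = 0 then C (c 0) else 0 := by
  simp only [charmatrix_apply_eq, companionMatrix, of_apply, Fin.val_zero]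
  grind

theorem charmatrix_companionMatrix_succ_zero (n : ℕ) (c : ℕ → R) (i : Fin n) :
    (companionMatrix (n + 1) c).charmatrix i.succ 0 = if (i : ℕ) + 1 = n then C (c 0) else 0 := by
  rw [charmatrix_apply_ne _ _ _ (Fin.succ_ne_zero i)]
  simp only [companionMatrix, of_apply, Fin.val_succ, Fin.val_zero]
  grind

theorem charpoly_companionMatrix (n : ℕ) (c : ℕ → R) :
    (companionMatrix n c).charpoly = X ^ n + ∑ j ∈ Finset.range n, C (c j) * X ^ j := by
  induction n generalizing c with
  | zero => simp [charpoly]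
  | succ n ih =>
    have hminor : ((companionMatrix (n + 1) c).charmatrix.submatrix Fin.succ Fin.succ).det
        = X ^ n + ∑ j ∈ Finset.range n, C (c (j + 1)) * X ^ j := by
      rw [charmatrix_submatrix _ (Fin.succ_injective n), companionMatrix_submatrix_succ,
        ← charpoly, ih]
    rw [charpoly, det_succ_column_zero, Fin.sum_univ_succ]
    simp only [Fin.succAbove_zero, charmatrix_companionMatrix_succ_zero,
      charmatrix_companionMatrix_zero_zero, hminor]
    rcases n with _ | n
    · simp
    · rw [Fin.sum_univ_castSucc]
      have hne : ∀ i : Fin n, (i : ℕ) + 1 ≠ n + 1 := fun i => by omega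
      simp only [Fin.val_castSucc, Fin.val_last, hne, if_false, if_true, mul_zero, zero_mul,
        Finset.sum_const_zero, zero_add, Fin.succ_last, Fin.succAbove_last,
        det_charmatrix_companionMatrix_submatrix_last, Nat.add_eq_zero_iff, one_ne_zero, and_false]
      rw [Finset.sum_range_succ' _ (n + 1)]
      have hsum : X * ∑ j ∈ Finset.range (n + 1), C (c (j + 1)) * X ^ j
          = ∑ j ∈ Finset.range (n + 1), C (c (j + 1)) * X ^ (j + 1) := by
        rw [Finset.mul_sum]
        exact Finset.sum_congr rfl fun _ _ => by ring
      have hsign : ((-1 : R[X]) ^ (n + 1)) * (-1) ^ (n + 1) = 1 := by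
        rw [← mul_pow]
        simp
      simp only [Fin.val_zero, pow_zero, one_mul, add_zero, Nat.succ_eq_add_one]
      linear_combination hsum + C (c 0) * hsign

theorem of_mul_companionMatrix_apply {n : ℕ} (a : ℕ → ℕ → R) (c : ℕ → R) (i j : Fin n) :
    (of (fun k l : Fin n => a k l) * companionMatrix n c) i j
      = (if 0 < (j : ℕ) then a i (j - 1) else 0) - a i (n - 1) * c j := by
  have hsplit : ∀ k ∈ Finset.range n,
      a i k * (if (j : ℕ) = k + 1 then 1 else if k = n - 1 then -c j else 0)
        = (if k = j - 1 then (if 0 < (j : ℕ) then a i k else 0) else 0)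
          - (if k = n - 1 then a i k * c j else 0) := by
    intro k hk
    simp only [Finset.mem_range] at hk
    split_ifs <;> first | omega | ring
  rw [mul_apply]
  refine (Fin.sum_univ_eq_sum_range
    (fun k => a i k * (if (j : ℕ) = k + 1 then 1 else if k = n - 1 then -c j else 0)) n).trans ?_
  rw [Finset.sum_congr rfl hsplit, Finset.sum_sub_distrib, Finset.sum_ite_eq', Finset.sum_ite_eq',
    if_pos (Finset.mem_range.mpr (by omega)),
    if_pos (Finset.mem_range.mpr (by have := i.isLt; omega))]

/-- The matrix `X_n` of the Newton identities, with rows and columns indexed from `0`. -/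
def newtonMatrix (n : ℕ) (x : ℕ → R) : Matrix (Fin n) (Fin n) R :=
  of fun i j => if (j : ℕ) ≤ i then x (i - j + 1) else if (j : ℕ) = i + 1 then (j : R) else 0

theorem newtonMatrix_mul_of_apply {n : ℕ} (x : ℕ → R) (b : ℕ → ℕ → R) (i j : Fin n) :
    (newtonMatrix n x * of fun k l : Fin n => b k l) i j
      = ∑ k ∈ Finset.range (i + 1), x (i + 1 - k) * b k j
        + if (i : ℕ) + 1 < n then ((i : R) + 1) * b (i + 1) j else 0 := by
  have hsplit : ∀ k ∈ Finset.range n,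
      (if k ≤ i then x (i - k + 1) else if k = (i : ℕ) + 1 then (k : R) else 0) * b k j
        = (if k ∈ Finset.range (i + 1) then x (i + 1 - k) * b k j else 0)
          + (if (i : ℕ) + 1 = k then ((i : R) + 1) * b (i + 1) j else 0) := by
    intro k hk
    simp only [Finset.mem_range] at hk ⊢
    by_cases hki : k ≤ i
    · rw [if_pos hki, if_pos (by omega), if_neg (by omega), add_zero, Nat.sub_add_comm hki]
    · by_cases hk' : k = (i : ℕ) + 1
      · subst hk'
        simp
      · rw [if_neg hki, if_neg hk', if_neg (by omega), if_neg (by omega), zero_mul, add_zero]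
  rw [mul_apply]
  refine (Fin.sum_univ_eq_sum_range (fun k =>
    (if k ≤ i then x (i - k + 1) else if k = (i : ℕ) + 1 then (k : R) else 0) * b k j) n).trans ?_
  rw [Finset.sum_congr rfl hsplit, Finset.sum_add_distrib, Finset.sum_ite_eq, ← Finset.sum_filter,
    Finset.filter_mem_eq_inter, Finset.range_inter_range, min_eq_right (by omega)]
  simp only [Finset.mem_range]

theorem sum_range_mul_eq_neg_of_newton {n : ℕ} {q x : ℕ → R} (hq0 : q 0 = 1)
    (hnewton : ∀ k, 1 ≤ k → k ≤ n →
      x k + (∑ j ∈ Finset.Icc 1 (k - 1), q j * x (k - j)) + (k : R) * q k = 0) :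
    ∀ s ≤ n, ∑ t ∈ Finset.range s, q t * x (s - t) = -(s : R) * q s := by
  rintro (_ | s) hs
  · simp
  rw [Finset.sum_range_succ', hq0, one_mul, Nat.sub_zero]
  have hshift := Finset.sum_Ico_add' (fun j => q j * x (s + 1 - j)) 0 s 1
  rw [zero_add, Finset.Ico_add_one_right_eq_Icc, Nat.Ico_zero_eq_range] at hshift
  have := hnewton (s + 1) (by omega) hs
  rw [Nat.add_sub_cancel, ← hshift] at this
  linear_combination this

end CommRing

section Field

variable {K : Type*} [Field K]

/-- The entries of `P`, indexed from `0`, so that the paper's `(j - 1)!` becomes `j !`. -/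
def divFactorialToeplitz (q : ℕ → K) (i j : ℕ) : K :=
  if j ≤ i then q (i - j) / j ! else 0

theorem natCast_mul_divFactorialToeplitz_succ [CharZero K] (q : ℕ → K) (i j : ℕ) :
    (j : K) * divFactorialToeplitz q (i + 1) j
      = if 0 < j then divFactorialToeplitz q i (j - 1) else 0 := by
  unfold divFactorialToeplitz
  rcases j with _ | j
  · simp
  by_cases hji : j ≤ i
  · rw [if_pos (by omega), if_pos (by omega), if_pos (by omega), Nat.factorial_succ,
      show i + 1 - (j + 1) = i - (j + 1 - 1) by omega, Nat.add_sub_cancel]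
    push_cast
    field_simp
  · rw [if_neg (by omega), if_pos (by omega), if_neg (by omega), mul_zero]

theorem isUnit_divFactorialToeplitz [CharZero K] {q : ℕ → K} (hq0 : q 0 = 1) (n : ℕ) :
    IsUnit (of fun i j : Fin n => divFactorialToeplitz q i j) := by
  have hlower : (of fun i j : Fin n => divFactorialToeplitz q i j).IsLowerTriangular :=
    fun _ _ hij => if_neg (not_le.mpr hij)
  rw [isUnit_iff_isUnit_det, det_of_isLowerTriangular _ hlower, isUnit_iff_ne_zero,
    Finset.prod_ne_zero_iff]
  intro i _
  simp [divFactorialToeplitz, hq0, Nat.factorial_ne_zero]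

theorem sum_range_mul_divFactorialToeplitz {n : ℕ} {q x : ℕ → K}
    (hnewton : ∀ s ≤ n, ∑ t ∈ Finset.range s, q t * x (s - t) = -(s : K) * q s)
    {m : ℕ} (hm : m ≤ n) (j : ℕ) :
    ∑ k ∈ Finset.range m, x (m - k) * divFactorialToeplitz q k j
      = ((j : K) - m) * divFactorialToeplitz q m j := by
  unfold divFactorialToeplitz
  by_cases hjm : j ≤ m
  · simp only [mul_ite, mul_zero]
    rw [← Finset.sum_filter, if_pos hjm]
    have hfilter : (Finset.range m).filter (j ≤ ·) = Finset.Ico j m := by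
      ext k; simp only [Finset.mem_filter, Finset.mem_range, Finset.mem_Ico]; omega
    rw [hfilter, Finset.sum_Ico_eq_sum_range]
    have hreindex : ∀ t ∈ Finset.range (m - j),
        x (m - (j + t)) * (q (j + t - j) / j !) = q t * x (m - j - t) / j ! := by
      intro t _
      rw [show j + t - j = t by omega, show m - (j + t) = m - j - t by omega]
      ring
    rw [Finset.sum_congr rfl hreindex, ← Finset.sum_div, hnewton _ (by omega),
      Nat.cast_sub hjm]
    ring
  · rw [if_neg hjm, mul_zero]
    exact Finset.sum_eq_zero fun k hk => by
      rw [if_neg (by have := Finset.mem_range.mp hk; omega), mul_zero]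

theorem divFactorialToeplitz_self_mul_descFactorial [CharZero K] {q : ℕ → K} (hq0 : q 0 = 1)
    {m j : ℕ} (hj : j ≤ m + 1) :
    divFactorialToeplitz q m m * ((m + 1).descFactorial (m + 1 - j) * q (m + 1 - j))
      = (m + 1) * divFactorialToeplitz q (m + 1) j := by
  have hfact : ((m + 1).descFactorial (m + 1 - j) : K) * j ! = (m + 1) * m ! := by
    have := Nat.factorial_mul_descFactorial (show m + 1 - j ≤ m + 1 by omega)
    rw [show m + 1 - (m + 1 - j) = j by omega, Nat.factorial_succ] at this
    exact_mod_cast by rw [mul_comm]; exact this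
  unfold divFactorialToeplitz
  rw [if_pos le_rfl, Nat.sub_self, hq0, if_pos hj]
  have hm : (m ! : K) ≠ 0 := Nat.cast_ne_zero.mpr m.factorial_ne_zero
  have hj : (j ! : K) ≠ 0 := Nat.cast_ne_zero.mpr j.factorial_ne_zero
  field_simp
  linear_combination q (m + 1 - j) * hfact

theorem divFactorialToeplitz_mul_companionMatrix [CharZero K] {n : ℕ} {q x : ℕ → K}
    (hq0 : q 0 = 1)
    (hnewton : ∀ s ≤ n, ∑ t ∈ Finset.range s, q t * x (s - t) = -(s : K) * q s) :
    (of fun i j : Fin n => divFactorialToeplitz q i j)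
        * companionMatrix n (fun j => (n.descFactorial (n - j) : K) * q (n - j))
      = newtonMatrix n x * of fun i j : Fin n => divFactorialToeplitz q i j := by
  ext i j
  rw [of_mul_companionMatrix_apply, newtonMatrix_mul_of_apply,
    sum_range_mul_divFactorialToeplitz hnewton (by omega),
    ← natCast_mul_divFactorialToeplitz_succ]
  push_cast
  by_cases hi : (i : ℕ) + 1 < n
  · have hzero : divFactorialToeplitz q i (n - 1) = 0 := if_neg (by omega)
    rw [if_pos hi, hzero]
    ring
  · obtain ⟨m, rfl⟩ : ∃ m, n = m + 1 := ⟨n - 1, by omega⟩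
    have him : (i : ℕ) = m := by omega
    rw [if_neg hi, him, Nat.add_sub_cancel,
      divFactorialToeplitz_self_mul_descFactorial hq0 (by omega)]
    ring

end Field

/-- P·C = X_n·P where P is the lower triangular matrix with entries q_{i-j}/(j-1)!,
    C is the companion matrix of Q(x) = x^n + Σ n(n-1)⋯(n-k+1) q_k x^{n-k}, and X_n is
    the Newton-identity matrix; in particular X_n has characteristic polynomial Q. -/
theorem newton_matrix_similar_companion (n : ℕ) (q : ℕ → ℂ) (hq0 : q 0 = 1)
    (x : ℕ → ℂ)
    (hnewton : ∀ k, 1 ≤ k → k ≤ n →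
      x k + (∑ j ∈ Finset.Icc 1 (k - 1), q j * x (k - j)) + (k : ℂ) * q k = 0)
    (Xn P Cmat : Matrix (Fin n) (Fin n) ℂ)
    (hXn : ∀ i j : Fin n, Xn i j =
      if (j : ℕ) ≤ (i : ℕ) then x ((i : ℕ) - (j : ℕ) + 1)
      else if (j : ℕ) = (i : ℕ) + 1 then ((j : ℕ) : ℂ) else 0)
    (hP : ∀ i j : Fin n, P i j =
      if (j : ℕ) ≤ (i : ℕ) then q ((i : ℕ) - (j : ℕ)) / ((j : ℕ).factorial : ℂ) else 0)
    (hC : ∀ i j : Fin n, Cmat i j =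
      if (j : ℕ) = (i : ℕ) + 1 then 1
      else if (i : ℕ) = n - 1 then -((n.descFactorial (n - (j : ℕ)) : ℂ) * q (n - (j : ℕ)))
      else 0) :
    P * Cmat = Xn * P ∧
      Xn.charpoly = X ^ n + ∑ k ∈ Finset.Icc 1 n,
        C ((n.descFactorial k : ℂ) * q k) * X ^ (n - k) := by
  obtain rfl : Xn = newtonMatrix n x := ext hXn
  obtain rfl : P = of fun i j : Fin n => divFactorialToeplitz q i j := ext hP
  obtain rfl : Cmat = companionMatrix n fun j => (n.descFactorial (n - j) : ℂ) * q (n - j) :=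
    ext hC
  have hsimilar := divFactorialToeplitz_mul_companionMatrix hq0
    (sum_range_mul_eq_neg_of_newton hq0 hnewton)
  refine ⟨hsimilar, ?_⟩
  rw [← charpoly_eq_of_mul_eq_mul (isUnit_divFactorialToeplitz hq0 n) hsimilar,
    charpoly_companionMatrix]
  congr 1
  refine Finset.sum_nbij' (n - ·) (n - ·) ?_ ?_ ?_ ?_ ?_ <;>
    intro k hk <;> simp only [Finset.mem_range, Finset.mem_Icc] at hk ⊢
  any_goals omega
  rw [Nat.sub_sub_self hk.le]
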